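/- arXiv:2303.02438 — 4 statements merged into one kernel-verified Lean document; each statement's English description precedes it below -/
import Mathlib

section
/- Let Λ be a real p×d matrix with full rank d, μ a probability measure on (0,∞) with ∫₀^∞ w^{−d/2} dμ(w) < ∞, and ρ > 0. Define h(x) = (2π)^{−d/2} det(ΛᵀΛ)^{1/2} ∫₀^∞ w^{−d/2} exp(−xᵀ(ΛᵀΛ)x/(2w)) dμ(w), K_0(x) = ρ h(x)/h(0), and φ(x) = (ρ/h(0)) ∫₀^∞ exp(−2π² w · xᵀ(ΛᵀΛ)^{−1}x) dμ(w). Then both K_0 and φ are integrable over ℝ^d (i.e., K_0 ∈ L¹(ℝ^d) and φ ∈ L¹(ℝ^d)). -/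
/-!
Both `K₀` and `φ` are scale mixtures `x ↦ ∫ a(w) exp(-b(w) xᵀMx) dμ(w)` of centred Gaussians,
with `M = ΛᵀΛ` (positive definite since `Λ` has full column rank) or its inverse. By Tonelli it
suffices that the Gaussian masses, of order `|a(w)| b(w)^(-d/2)`, are `μ`-integrable. For `K₀`,
`a(w) = w^(-d/2)` and `b(w) = 1/(2w)`, so the mass is constant; for `φ`, `a = 1` and
`b(w) = 2π²w`, so the mass is the assumed moment `∫ w^(-d/2) dμ`.
-/

open MeasureTheory Matrix Real

theorem Matrix.mulVec_injective_of_rank_eq_card {K m n : Type*} [Field K] [Fintype m] [Fintype n]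
    (A : Matrix m n K) (hA : A.rank = Fintype.card n) : Function.Injective A.mulVec := by
  have h := LinearMap.finrank_range_add_finrank_ker A.mulVecLin
  rw [← Matrix.rank, hA, Module.finrank_fintype_fun_eq_card, add_eq_left,
    Submodule.finrank_eq_zero] at h
  exact LinearMap.ker_eq_bot.mp h

theorem Matrix.posDef_transpose_mul_self_of_rank_eq_card {m n : Type*} [Fintype m] [Fintype n]
    (A : Matrix m n ℝ) (hA : A.rank = Fintype.card n) : (Aᵀ * A).PosDef := by
  simpa only [conjTranspose_eq_transpose_of_trivial]
    using PosDef.conjTranspose_mul_self A (A.mulVec_injective_of_rank_eq_card hA)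

open scoped MatrixOrder in
theorem Matrix.PosDef.exists_pos_mul_dotProduct_self_le {n : Type*} [Fintype n] [DecidableEq n]
    {M : Matrix n n ℝ} (hM : M.PosDef) :
    ∃ c > 0, ∀ x : n → ℝ, c * (x ⬝ᵥ x) ≤ x ⬝ᵥ M *ᵥ x := by
  cases isEmpty_or_nonempty n
  · exact ⟨1, one_pos, fun x => by simp [dotProduct]⟩
  obtain ⟨c, hc, hcM⟩ := (CFC.exists_pos_algebraMap_le_iff hM.isHermitian.isSelfAdjoint).2
    fun _ => hM.isStrictlyPositive.spectrum_pos
  refine ⟨c, hc, fun x => ?_⟩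
  simpa only [star_trivial, Algebra.algebraMap_eq_smul_one, sub_mulVec, smul_mulVec, one_mulVec,
    dotProduct_sub, dotProduct_smul, smul_eq_mul, sub_nonneg]
    using (Matrix.le_iff.mp hcM).dotProduct_mulVec_nonneg x

section Gaussian

variable {ι : Type*} [Fintype ι]

theorem exp_neg_mul_dotProduct_self_eq_prod (b : ℝ) (x : ι → ℝ) :
    exp (-(b * (x ⬝ᵥ x))) = ∏ i, exp (-b * x i ^ 2) := by
  rw [← exp_sum, dotProduct, Finset.mul_sum, ← Finset.sum_neg_distrib]
  exact congrArg exp (Finset.sum_congr rfl fun i _ => by ring)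

theorem integrable_exp_neg_mul_dotProduct_self {b : ℝ} (hb : 0 < b) :
    Integrable fun x : ι → ℝ => exp (-(b * (x ⬝ᵥ x))) := by
  simp_rw [exp_neg_mul_dotProduct_self_eq_prod]
  exact Integrable.fintype_prod fun _ => integrable_exp_neg_mul_sq hb

theorem integral_exp_neg_mul_dotProduct_self {b : ℝ} (hb : 0 < b) :
    ∫ x : ι → ℝ, exp (-(b * (x ⬝ᵥ x))) = (π / b) ^ ((Fintype.card ι : ℝ) / 2) := by
  simp_rw [exp_neg_mul_dotProduct_self_eq_prod]
  rw [integral_fintype_prod_volume_eq_pow (fun t : ℝ => exp (-b * t ^ 2)), integral_gaussian,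
    sqrt_eq_rpow, ← rpow_natCast, ← rpow_mul (div_pos pi_pos hb).le, one_div_mul_eq_div]

variable {M : Matrix ι ι ℝ} {c : ℝ} (hc : 0 < c) (hcM : ∀ x, c * (x ⬝ᵥ x) ≤ x ⬝ᵥ M *ᵥ x)
include hcM

theorem exp_neg_mul_quadratic_le {b : ℝ} (hb : 0 ≤ b) (x : ι → ℝ) :
    exp (-(b * (x ⬝ᵥ M *ᵥ x))) ≤ exp (-(c * b * (x ⬝ᵥ x))) := by
  rw [exp_le_exp, neg_le_neg_iff, mul_comm c, mul_assoc]
  exact mul_le_mul_of_nonneg_left (hcM x) hb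

include hc

theorem integrable_exp_neg_mul_quadratic {b : ℝ} (hb : 0 < b) :
    Integrable fun x : ι → ℝ => exp (-(b * (x ⬝ᵥ M *ᵥ x))) :=
  (integrable_exp_neg_mul_dotProduct_self (mul_pos hc hb)).mono' (by fun_prop)
    (.of_forall fun x => by
      rw [norm_of_nonneg (exp_pos _).le]; exact exp_neg_mul_quadratic_le hcM hb.le x)

theorem integral_exp_neg_mul_quadratic_le {b : ℝ} (hb : 0 < b) :
    ∫ x : ι → ℝ, exp (-(b * (x ⬝ᵥ M *ᵥ x))) ≤
      (π / c) ^ ((Fintype.card ι : ℝ) / 2) * b ^ (-(Fintype.card ι : ℝ) / 2) := by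
  calc ∫ x : ι → ℝ, exp (-(b * (x ⬝ᵥ M *ᵥ x)))
      ≤ ∫ x : ι → ℝ, exp (-(c * b * (x ⬝ᵥ x))) :=
        integral_mono (integrable_exp_neg_mul_quadratic hc hcM hb)
          (integrable_exp_neg_mul_dotProduct_self (mul_pos hc hb))
          (exp_neg_mul_quadratic_le hcM hb.le)
    _ = (π / c) ^ ((Fintype.card ι : ℝ) / 2) * b ^ (-(Fintype.card ι : ℝ) / 2) := by
        rw [integral_exp_neg_mul_dotProduct_self (mul_pos hc hb), ← div_div,
          div_rpow (div_pos pi_pos hc).le hb.le, neg_div, rpow_neg hb.le, div_eq_mul_inv]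

end Gaussian

theorem integrable_integral_mul_exp_neg_mul_quadratic {ι : Type*} [Fintype ι] [DecidableEq ι]
    {M : Matrix ι ι ℝ} (hM : M.PosDef) {μ : Measure ℝ} [SFinite μ] {a b : ℝ → ℝ}
    (ha : Measurable a) (hb : Measurable b) (hb_pos : ∀ᵐ w ∂μ, 0 < b w)
    (hab : Integrable (fun w => a w * b w ^ (-(Fintype.card ι : ℝ) / 2)) μ) :
    Integrable fun x : ι → ℝ => ∫ w, a w * exp (-(b w * (x ⬝ᵥ M *ᵥ x))) ∂μ := by
  obtain ⟨c, hc, hcM⟩ := hM.exists_pos_mul_dotProduct_self_le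
  set F : (ι → ℝ) × ℝ → ℝ := fun z => a z.2 * exp (-(b z.2 * (z.1 ⬝ᵥ M *ᵥ z.1)))
  have hF : Measurable F := by fun_prop
  refine Integrable.integral_prod_left ((integrable_prod_iff' hF.aestronglyMeasurable).2 ⟨?_, ?_⟩)
  · filter_upwards [hb_pos] with w hw
    exact (integrable_exp_neg_mul_quadratic hc hcM hw).const_mul (a w)
  · refine (hab.norm.const_mul ((π / c) ^ ((Fintype.card ι : ℝ) / 2))).mono'
      hF.norm.stronglyMeasurable.integral_prod_left'.aestronglyMeasurable ?_
    filter_upwards [hb_pos] with w hw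
    have hnorm : ∀ x, ‖F (x, w)‖ = ‖a w‖ * exp (-(b w * (x ⬝ᵥ M *ᵥ x))) := fun x => by
      rw [norm_mul, norm_of_nonneg (exp_pos _).le]
    calc ‖∫ x, ‖F (x, w)‖‖ = ‖a w‖ * ∫ x, exp (-(b w * (x ⬝ᵥ M *ᵥ x))) := by
          rw [norm_of_nonneg (integral_nonneg fun _ => norm_nonneg _), integral_congr_ae
            (.of_forall hnorm), integral_const_mul]
      _ ≤ ‖a w‖ * ((π / c) ^ ((Fintype.card ι : ℝ) / 2) * b w ^ (-(Fintype.card ι : ℝ) / 2)) :=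
          mul_le_mul_of_nonneg_left (integral_exp_neg_mul_quadratic_le hc hcM hw) (norm_nonneg _)
      _ = (π / c) ^ ((Fintype.card ι : ℝ) / 2) * ‖a w * b w ^ (-(Fintype.card ι : ℝ) / 2)‖ := by
          rw [norm_mul, norm_of_nonneg (rpow_nonneg hw.le _)]; ring

section ScaleMixture

variable {ι : Type*} [Fintype ι] [DecidableEq ι] {M : Matrix ι ι ℝ} {μ : Measure ℝ}

theorem integrable_integral_rpow_mul_exp_neg_div (hM : M.PosDef) [IsFiniteMeasure μ]
    (hμ : ∀ᵐ w ∂μ, 0 < w) :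
    Integrable fun x : ι → ℝ =>
      ∫ w, w ^ (-(Fintype.card ι : ℝ) / 2) * exp (-(x ⬝ᵥ M *ᵥ x) / (2 * w)) ∂μ := by
  have hmass : Integrable (fun w : ℝ => w ^ (-(Fintype.card ι : ℝ) / 2) *
      (2 * w)⁻¹ ^ (-(Fintype.card ι : ℝ) / 2)) μ :=
    (integrable_const ((2 : ℝ)⁻¹ ^ (-(Fintype.card ι : ℝ) / 2))).congr <| hμ.mono fun w hw => by
      dsimp only
      rw [← mul_rpow hw.le (by positivity)]
      field_simp
  refine (integrable_integral_mul_exp_neg_mul_quadratic hM (by fun_prop) (by fun_prop)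
    (hμ.mono fun w hw => by positivity) hmass).congr
    (.of_forall fun x => integral_congr_ae (.of_forall fun w => ?_))
  dsimp only
  ring_nf

theorem integrable_integral_exp_neg_mul_mul (hM : M.PosDef) [SFinite μ] (hμ : ∀ᵐ w ∂μ, 0 < w)
    (hint : Integrable (fun w : ℝ => w ^ (-(Fintype.card ι : ℝ) / 2)) μ) {s : ℝ} (hs : 0 < s) :
    Integrable fun x : ι → ℝ => ∫ w, exp (-(s * w * (x ⬝ᵥ M *ᵥ x))) ∂μ := by
  have hmass : Integrable (fun w : ℝ => 1 * (s * w) ^ (-(Fintype.card ι : ℝ) / 2)) μ :=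
    (hint.const_mul (s ^ (-(Fintype.card ι : ℝ) / 2))).congr <| hμ.mono fun w hw => by
      dsimp only
      rw [one_mul, mul_rpow hs.le hw.le]
  simpa only [one_mul] using
    integrable_integral_mul_exp_neg_mul_quadratic hM measurable_const (by fun_prop)
      (hμ.mono fun w hw => by positivity) hmass

end ScaleMixture

theorem stmt2_general (p d : ℕ)
    (Λ : Matrix (Fin p) (Fin d) ℝ) (hΛ : Λ.rank = d)
    (μ : Measure ℝ) [IsProbabilityMeasure μ] (hμ : μ (Set.Iic 0) = 0)
    (hint : Integrable (fun w : ℝ => w ^ (-(d : ℝ) / 2)) μ)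
    (ρ : ℝ)
    (h : (Fin d → ℝ) → ℝ)
    (hh : h = fun x =>
      (2 * π) ^ (-(d : ℝ) / 2) * Real.sqrt (Λᵀ * Λ).det *
        ∫ w, w ^ (-(d : ℝ) / 2) * Real.exp (-(x ⬝ᵥ ((Λᵀ * Λ) *ᵥ x)) / (2 * w)) ∂μ)
    (K₀ : (Fin d → ℝ) → ℝ) (hK₀ : K₀ = fun x => ρ * h x / h 0)
    (φ : (Fin d → ℝ) → ℝ)
    (hφ : φ = fun x =>
      (ρ / h 0) * ∫ w, Real.exp (-(2 * π ^ 2 * w * (x ⬝ᵥ ((Λᵀ * Λ)⁻¹ *ᵥ x)))) ∂μ) :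
    Integrable K₀ (volume : Measure (Fin d → ℝ)) ∧
      Integrable φ (volume : Measure (Fin d → ℝ)) := by
  have hw : ∀ᵐ w ∂μ, 0 < w := ae_iff.2 (by simp only [not_lt]; exact hμ)
  have hM : (Λᵀ * Λ).PosDef :=
    Λ.posDef_transpose_mul_self_of_rank_eq_card (by rw [hΛ, Fintype.card_fin])
  have hG := integrable_integral_rpow_mul_exp_neg_div hM hw
  have hΦ := integrable_integral_exp_neg_mul_mul hM.inv hw (by rwa [Fintype.card_fin])
    (by positivity : 0 < 2 * π ^ 2)
  rw [Fintype.card_fin] at hG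
  subst hh hK₀ hφ
  exact ⟨((hG.const_mul _).const_mul ρ).div_const _, hΦ.const_mul _⟩

theorem stmt2 (p d : ℕ) (hd : 1 ≤ d) (hdp : d ≤ p)
    (Λ : Matrix (Fin p) (Fin d) ℝ) (hΛ : Λ.rank = d)
    (μ : Measure ℝ) [IsProbabilityMeasure μ] (hμ : μ (Set.Iic 0) = 0)
    (hint : Integrable (fun w : ℝ => w ^ (-(d : ℝ) / 2)) μ)
    (ρ : ℝ) (hρ : 0 < ρ)
    (h : (Fin d → ℝ) → ℝ)
    (hh : h = fun x =>
      (2 * π) ^ (-(d : ℝ) / 2) * Real.sqrt (Λᵀ * Λ).det *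
        ∫ w, w ^ (-(d : ℝ) / 2) * Real.exp (-(x ⬝ᵥ ((Λᵀ * Λ) *ᵥ x)) / (2 * w)) ∂μ)
    (K₀ : (Fin d → ℝ) → ℝ) (hK₀ : K₀ = fun x => ρ * h x / h 0)
    (φ : (Fin d → ℝ) → ℝ)
    (hφ : φ = fun x =>
      (ρ / h 0) * ∫ w, Real.exp (-(2 * π ^ 2 * w * (x ⬝ᵥ ((Λᵀ * Λ)⁻¹ *ᵥ x)))) ∂μ) :
    Integrable K₀ (volume : Measure (Fin d → ℝ)) ∧
      Integrable φ (volume : Measure (Fin d → ℝ)) :=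
  stmt2_general p d Λ hΛ μ hμ hint ρ h hh K₀ hK₀ φ hφ
end

section
/- Let Λ be a real p×d matrix with full rank d and let ν, α > 0. Let μ be the Gamma distribution on (0,∞) with shape ν + d/2 and rate β = 1/(2 det(ΛᵀΛ)^{1/d} α²). Then h(0) := (2π)^{−d/2} det(ΛᵀΛ)^{1/2} ∫₀^∞ w^{−d/2} dμ(w) = Γ(ν)/(Γ(ν+d/2) · (2√π α)^d). In particular the maximal admissible intensity ρ_max = h(0) of the Whittle–Matérn-like anisotropic DPP does not depend on Λ. -/
open MeasureTheory Matrix Real ProbabilityTheory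

private lemma aux_det_pos (p d : ℕ) (Λ : Matrix (Fin p) (Fin d) ℝ)
    (hΛ : Λ.rank = d) : 0 < (Λᵀ * Λ).det := by
  have hps : (Λᵀ * Λ).PosSemidef := by
    simpa using Matrix.posSemidef_conjTranspose_mul_self Λ
  have hnn : 0 ≤ (Λᵀ * Λ).det := by
    rw [hps.isHermitian.det_eq_prod_eigenvalues]
    exact Finset.prod_nonneg fun i _ => hps.eigenvalues_nonneg i
  have hrank : (Λᵀ * Λ).rank = d := by rw [Matrix.rank_transpose_mul_self, hΛ]
  have htop : LinearMap.range (Λᵀ * Λ).mulVecLin = ⊤ :=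
    Submodule.eq_top_of_finrank_eq (by
      simpa [Matrix.rank, Module.finrank_fintype_fun_eq_card] using hrank)
  have hunit : IsUnit (Λᵀ * Λ) := by
    rw [← Matrix.mulVec_surjective_iff_isUnit]
    intro y
    obtain ⟨x, hx⟩ := LinearMap.range_eq_top.mp htop y
    exact ⟨x, hx⟩
  have hne : (Λᵀ * Λ).det ≠ 0 :=
    ((Matrix.isUnit_iff_isUnit_det _).mp hunit).ne_zero
  exact lt_of_le_of_ne hnn (Ne.symm hne)

private lemma aux_gamma_moment (d : ℕ) (ν β : ℝ) (hν : 0 < ν) (hβ : 0 < β) :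
    (∫ w, w ^ (-(d : ℝ) / 2) ∂(gammaMeasure (ν + d / 2) β)) =
      β ^ ((d : ℝ) / 2) * Real.Gamma ν / Real.Gamma (ν + d / 2) := by
  have ha : 0 < ν + (d : ℝ) / 2 := by positivity
  set a := ν + (d : ℝ) / 2 with ha_def
  have hmeas : Measurable fun x => (gammaPDFReal a β x).toNNReal :=
    (measurable_gammaPDFReal a β).real_toNNReal
  have hdm : gammaMeasure a β
      = volume.withDensity (fun x => ((gammaPDFReal a β x).toNNReal : ENNReal)) := by
    rfl
  rw [hdm, integral_withDensity_eq_integral_smul hmeas]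
  have hae : (fun x => (gammaPDFReal a β x).toNNReal • x ^ (-(d : ℝ) / 2))
      =ᵐ[volume] (Set.Ioi (0:ℝ)).indicator
        (fun x => (gammaPDFReal a β x).toNNReal • x ^ (-(d : ℝ) / 2)) := by
    have h0 : (volume : Measure ℝ) {0} = 0 := volume_singleton
    filter_upwards [compl_mem_ae_iff.mpr h0] with x hx
    simp only [Set.mem_compl_iff, Set.mem_singleton_iff] at hx
    rcases lt_or_gt_of_ne hx with h | h
    · rw [Set.indicator_of_notMem (by simpa using h.le.not_gt)]
      simp [gammaPDFReal, h.not_ge]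
    · rw [Set.indicator_of_mem (by exact h)]
  rw [integral_congr_ae hae, integral_indicator measurableSet_Ioi]
  have heq : ∀ x ∈ Set.Ioi (0:ℝ),
      (gammaPDFReal a β x).toNNReal • x ^ (-(d : ℝ) / 2)
        = β ^ a / Real.Gamma a * (x ^ (ν - 1) * Real.exp (-(β * x))) := by
    intro x hx
    have hx0 : (0:ℝ) < x := hx
    have hpos : 0 ≤ gammaPDFReal a β x := gammaPDFReal_nonneg ha hβ x
    rw [NNReal.smul_def, Real.coe_toNNReal _ hpos]
    rw [gammaPDFReal, if_pos hx0.le]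
    rw [show (-(d : ℝ) / 2) = (ν - 1) + (-(a - 1)) by rw [ha_def]; ring,
      Real.rpow_add hx0]
    have hx1 : x ^ ((a:ℝ)-1) * x ^ (-((a:ℝ)-1)) = 1 := by
      rw [← Real.rpow_add hx0]; norm_num
    rw [smul_eq_mul]
    calc β ^ a / Real.Gamma a * x ^ (a - 1) * Real.exp (-(β * x))
          * (x ^ (ν - 1) * x ^ (-(a - 1)))
        = (x ^ ((a:ℝ)-1) * x ^ (-((a:ℝ)-1)))
          * (β ^ a / Real.Gamma a * (x ^ (ν - 1) * Real.exp (-(β * x)))) := by ring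
      _ = β ^ a / Real.Gamma a * (x ^ (ν - 1) * Real.exp (-(β * x))) := by
          rw [hx1, one_mul]
  rw [setIntegral_congr_fun measurableSet_Ioi heq, integral_const_mul,
    integral_rpow_mul_exp_neg_mul_Ioi hν hβ]
  rw [div_rpow (by norm_num) hβ.le, one_rpow]
  rw [ha_def, Real.rpow_add hβ]
  field_simp

private lemma aux_key (d : ℕ) (hd : 1 ≤ d) (c α : ℝ) (hc : 0 < c) (hα : 0 < α) :
    (2 * π) ^ (-(d : ℝ) / 2) * Real.sqrt c *
      (1 / (2 * c ^ ((1 : ℝ) / d) * α ^ 2)) ^ ((d : ℝ) / 2)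
    = 1 / (2 * Real.sqrt π * α) ^ d := by
  have hπ : (0:ℝ) < π := Real.pi_pos
  have hD : (0:ℝ) < (d:ℝ) := by exact_mod_cast Nat.lt_of_lt_of_le Nat.zero_lt_one hd
  have hcr : (0:ℝ) < c ^ ((1:ℝ)/d) := Real.rpow_pos_of_pos hc _
  have hb : (0:ℝ) < 1 / (2 * c ^ ((1:ℝ)/d) * α ^ 2) := by positivity
  have hL : (0:ℝ) < (2 * π) ^ (-(d : ℝ) / 2) * Real.sqrt c *
      (1 / (2 * c ^ ((1 : ℝ) / d) * α ^ 2)) ^ ((d : ℝ) / 2) := by positivity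
  have hR : (0:ℝ) < 1 / (2 * Real.sqrt π * α) ^ d := by positivity
  rw [← Real.exp_log hL, ← Real.exp_log hR]
  congr 1
  rw [Real.log_mul (by positivity) (by positivity),
    Real.log_mul (by positivity) (by positivity),
    Real.log_rpow (by positivity), Real.log_rpow hb,
    Real.log_sqrt hc.le,
    Real.log_div one_ne_zero (by positivity),
    Real.log_div one_ne_zero (by positivity),
    Real.log_pow,
    Real.log_mul (by positivity) (by positivity),
    Real.log_mul (by positivity) (by positivity),
    Real.log_mul (by positivity) (by positivity),
    Real.log_mul (by positivity) (by positivity),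
    Real.log_rpow hc, Real.log_pow,
    Real.log_mul (two_ne_zero) (by positivity),
    Real.log_sqrt hπ.le, Real.log_one]
  field_simp
  ring

theorem stmt9 (p d : ℕ) (hd : 1 ≤ d) (hdp : d ≤ p)
    (Λ : Matrix (Fin p) (Fin d) ℝ) (hΛ : Λ.rank = d)
    (ν α : ℝ) (hν : 0 < ν) (hα : 0 < α)
    (β : ℝ) (hβ : β = 1 / (2 * (Λᵀ * Λ).det ^ ((1 : ℝ) / d) * α ^ 2))
    (μ : Measure ℝ) (hμ : μ = gammaMeasure (ν + d / 2) β) :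
    (2 * π) ^ (-(d : ℝ) / 2) * Real.sqrt (Λᵀ * Λ).det *
        (∫ w, w ^ (-(d : ℝ) / 2) ∂μ) =
      Real.Gamma ν / (Real.Gamma (ν + d / 2) * (2 * Real.sqrt π * α) ^ d) := by
  have hdet : 0 < (Λᵀ * Λ).det := aux_det_pos p d Λ hΛ
  have hβpos : 0 < β := by
    rw [hβ]
    have : (0:ℝ) < (Λᵀ * Λ).det ^ ((1:ℝ)/d) := Real.rpow_pos_of_pos hdet _
    positivity
  rw [hμ, aux_gamma_moment d ν β hν hβpos]
  have key : (2 * π) ^ (-(d : ℝ) / 2) * Real.sqrt (Λᵀ * Λ).det * β ^ ((d : ℝ) / 2)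
      = 1 / (2 * Real.sqrt π * α) ^ d := by
    rw [hβ]
    exact aux_key d hd (Λᵀ * Λ).det α hdet hα
  calc (2 * π) ^ (-(d : ℝ) / 2) * Real.sqrt (Λᵀ * Λ).det *
        (β ^ ((d : ℝ) / 2) * Real.Gamma ν / Real.Gamma (ν + d / 2))
      = ((2 * π) ^ (-(d : ℝ) / 2) * Real.sqrt (Λᵀ * Λ).det * β ^ ((d : ℝ) / 2))
        * Real.Gamma ν / Real.Gamma (ν + d / 2) := by ring
    _ = (1 / (2 * Real.sqrt π * α) ^ d) * Real.Gamma ν / Real.Gamma (ν + d / 2) := by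
        rw [key]
    _ = Real.Gamma ν / (Real.Gamma (ν + d / 2) * (2 * Real.sqrt π * α) ^ d) := by
        ring
end

section
/- Fix k ∈ ℝ^d and constants ρ, c > 0, and for a real p×d matrix Λ of full rank d define the Gaussian-like spectral density φ_Λ(k) = ρ (2π)^{d/2} c^{−1} exp(−2π² c^{−2/d} det(ΛᵀΛ)^{1/d} kᵀ(ΛᵀΛ)^{−1}k). Then the map Λ ↦ φ_Λ(k) is Fréchet differentiable at every full-rank Λ with gradient −2π² c^{−2/d} φ_Λ(k) · g^{(k)}(Λ), where g^{(k)}(Λ) = 2 det(ΛᵀΛ)^{1/d} Λ (ΛᵀΛ)^{−1} [ (1/d)(kᵀ(ΛᵀΛ)^{−1}k) I_d − k kᵀ (ΛᵀΛ)^{−1} ]. -/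
open Matrix Real

attribute [local instance] Matrix.normedAddCommGroup Matrix.normedSpace

/-- The continuous linear map `H ↦ tr(Gᵀ H)`, representing the gradient `G`. -/
noncomputable def gradCLM {p d : ℕ} (G : Matrix (Fin p) (Fin d) ℝ) :
    Matrix (Fin p) (Fin d) ℝ →L[ℝ] ℝ :=
  LinearMap.toContinuousLinearMap
    { toFun := fun H => (Gᵀ * H).trace
      map_add' := fun H₁ H₂ => by simp [Matrix.mul_add]
      map_smul' := fun c H => by simp [Matrix.mul_smul] }

/-- The gradient matrix `g^{(k)}(Λ)`. -/
noncomputable def gMat {p d : ℕ} (k : Fin d → ℝ) (Λ : Matrix (Fin p) (Fin d) ℝ) :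
    Matrix (Fin p) (Fin d) ℝ :=
  (2 * (Λᵀ * Λ).det ^ ((1 : ℝ) / d)) •
    (Λ * (Λᵀ * Λ)⁻¹ *
      (((k ⬝ᵥ ((Λᵀ * Λ)⁻¹ *ᵥ k)) / d) • (1 : Matrix (Fin d) (Fin d) ℝ) -
        Matrix.vecMulVec k k * (Λᵀ * Λ)⁻¹))

/-- The Gaussian-like spectral density `φ_Λ(k)`. -/
noncomputable def phiGauss {p d : ℕ} (ρ c : ℝ) (k : Fin d → ℝ)
    (Λ : Matrix (Fin p) (Fin d) ℝ) : ℝ :=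
  ρ * (2 * π) ^ ((d : ℝ) / 2) / c *
    Real.exp (-(2 * π ^ 2 * c ^ (-(2 : ℝ) / d) * (Λᵀ * Λ).det ^ ((1 : ℝ) / d) *
      (k ⬝ᵥ ((Λᵀ * Λ)⁻¹ *ᵥ k))))

/-!
Write `φ_Λ(k) = C · exp (-a · u(Λ) · q(Λ))` with `u = det (ΛᵀΛ) ^ (1/d)` and `q = kᵀ (ΛᵀΛ)⁻¹ k`;
`ΛᵀΛ` is invertible because `Λ` has full column rank. Jacobi's formula `d det A [E] = tr (adj A · E)`
and `d (A⁻¹) [E] = -A⁻¹ E A⁻¹`, composed with `d (ΛᵀΛ) [H] = HᵀΛ + ΛᵀH` and the symmetry of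
`(ΛᵀΛ)⁻¹`, give the gradients `∇u = (2/d) u · Λ(ΛᵀΛ)⁻¹` and `∇q = -2 · Λ(ΛᵀΛ)⁻¹ k kᵀ (ΛᵀΛ)⁻¹`.
By the product and chain rules `∇φ = -a φ (u ∇q + q ∇u)`, and `u ∇q + q ∇u` is `g^{(k)}(Λ)`.
-/

theorem MulEquiv.map_ringInverse {R S : Type*} [MonoidWithZero R] [MonoidWithZero S]
    (e : R ≃* S) (x : R) : e (Ring.inverse x) = Ring.inverse (e x) := by
  by_cases hx : IsUnit x
  · lift x to Rˣ using hx
    rw [Ring.inverse_unit, show e x = Units.map e.toMonoidHom x from rfl, Ring.inverse_unit]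
    rfl
  · rw [Ring.inverse_non_unit x hx, Ring.inverse_non_unit _ ((MulEquiv.isUnit_map e).not.mpr hx),
      map_zero]

namespace Matrix

section LinearAlgebra

variable {m n : Type*} [Fintype n]

theorem ker_mulVecLin_eq_bot_of_rank_eq_card {K : Type*} [Field K] {A : Matrix m n K}
    (h : A.rank = Fintype.card n) : LinearMap.ker A.mulVecLin = ⊥ := by
  have hsum := LinearMap.finrank_range_add_finrank_ker A.mulVecLin
  rwa [← rank, h, Module.finrank_fintype_fun_eq_card, add_eq_left,
    Submodule.finrank_eq_zero] at hsum

theorem isUnit_transpose_mul_self_of_rank_eq_card {K : Type*} [Field K] [LinearOrder K]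
    [IsStrictOrderedRing K] [Fintype m] [DecidableEq n] {A : Matrix m n K}
    (h : A.rank = Fintype.card n) : IsUnit (Aᵀ * A) := by
  refine mulVec_injective_iff_isUnit.mp (LinearMap.ker_eq_bot (f := (Aᵀ * A).mulVecLin).mp ?_)
  rw [ker_mulVecLin_transpose_mul_self]
  exact ker_mulVecLin_eq_bot_of_rank_eq_card h

variable {R : Type*} [CommSemiring R] [Fintype m]

def dotProductMulVecₗ (v : m → R) (w : n → R) : Matrix m n R →ₗ[R] R where
  toFun M := v ⬝ᵥ (M *ᵥ w)
  map_add' M N := by rw [add_mulVec, dotProduct_add]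
  map_smul' c M := by rw [smul_mulVec, dotProduct_smul]; rfl

theorem trace_vecMulVec_mul (v w : n → R) (M : Matrix n n R) :
    trace (vecMulVec v w * M) = w ⬝ᵥ (M *ᵥ v) := by
  rw [vecMulVec_mul, trace_vecMulVec, dotProduct_comm, dotProduct_mulVec]

theorem IsSymm.trace_mul_transpose_mul {B : Matrix n n R} (hB : B.IsSymm) (Λ H : Matrix m n R) :
    trace (B * (Hᵀ * Λ)) = trace (B * (Λᵀ * H)) := by
  rw [← trace_transpose, transpose_mul, transpose_mul, transpose_transpose, hB.eq, trace_mul_comm]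

theorem IsSymm.dotProduct_mul_transpose_mul_mulVec {B : Matrix n n R} (hB : B.IsSymm)
    (Λ H : Matrix m n R) (v : n → R) :
    v ⬝ᵥ ((B * (Hᵀ * Λ) * B) *ᵥ v) = v ⬝ᵥ ((B * (Λᵀ * H) * B) *ᵥ v) := by
  rw [← dotProduct_transpose_mulVec]
  simp only [transpose_mul, transpose_transpose, hB.eq, Matrix.mul_assoc]

end LinearAlgebra

section Calculus

variable {𝕜 : Type*} [RCLike 𝕜] {m n : Type*} [Fintype m] [Fintype n]

noncomputable def detContinuousMultilinear [DecidableEq n] :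
    ContinuousMultilinearMap 𝕜 (fun _ : n => n → 𝕜) 𝕜 where
  toMultilinearMap := (detRowAlternating : (n → 𝕜) [⋀^n]→ₗ[𝕜] 𝕜).toMultilinearMap
  cont := continuous_id.matrix_det

theorem hasFDerivAt_det [DecidableEq n] (A : Matrix n n 𝕜) :
    HasFDerivAt det
      (traceLinearMap n 𝕜 𝕜 ∘ₗ LinearMap.mulLeft 𝕜 A.adjugate).toContinuousLinearMap A := by
  refine ((detContinuousMultilinear (𝕜 := 𝕜) (n := n)).hasFDerivAt A).congr_fderiv
    (ContinuousLinearMap.ext fun (H : Matrix n n 𝕜) => ?_)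
  erw [ContinuousMultilinearMap.linearDeriv_apply]
  change ∑ i, det (A.updateRow i (H i)) = trace (A.adjugate * H)
  simp only [← cramer_transpose_apply, cramer_eq_adjugate_mulVec, ← adjugate_transpose, trace,
    diag, mul_apply, mulVec, dotProduct, transpose_apply]
  exact Finset.sum_comm

theorem hasFDerivAt_inv [DecidableEq n] {A : Matrix n n 𝕜} (hA : IsUnit A) :
    HasFDerivAt (fun M : Matrix n n 𝕜 => M⁻¹)
      (-LinearMap.mulLeftRight 𝕜 (A⁻¹, A⁻¹)).toContinuousLinearMap A := by
  -- The entrywise norm on matrices is not submultiplicative: transport the derivative of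
  -- `Ring.inverse` from the Banach algebra of operators along `toEuclideanCLM`.
  let e := toEuclideanCLM (n := n) (𝕜 := 𝕜)
  let E : Matrix n n 𝕜 ≃L[𝕜] _ := e.toAlgEquiv.toLinearEquiv.toContinuousLinearEquiv
  have hinv : (fun M : Matrix n n 𝕜 => M⁻¹) = fun M => E.symm (Ring.inverse (E M)) := by
    funext M
    rw [nonsing_inv_eq_ringInverse]
    exact (E.symm_apply_eq.mpr (e.toMulEquiv.map_ringInverse M).symm).symm
  rw [hinv]
  have hunit : ((hA.map e).unit⁻¹ : _) = e A⁻¹ :=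
    Units.inv_eq_of_mul_eq_one_right <| by
      rw [IsUnit.unit_spec, ← map_mul, mul_nonsing_inv _ ((isUnit_iff_isUnit_det A).mp hA),
        map_one]
  have hconj := E.symm.hasFDerivAt.comp A
    ((hasFDerivAt_ringInverse (𝕜 := 𝕜) (hA.map e).unit).comp A E.hasFDerivAt)
  refine hconj.congr_fderiv (ContinuousLinearMap.ext fun H => ?_)
  change E.symm (-(((hA.map e).unit⁻¹ : _) * E H * ((hA.map e).unit⁻¹ : _))) = -(A⁻¹ * H * A⁻¹)
  rw [hunit, E.symm_apply_eq]
  change -(e A⁻¹ * e H * e A⁻¹) = e (-(A⁻¹ * H * A⁻¹))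
  rw [map_neg, map_mul, map_mul]

theorem hasFDerivAt_transpose_mul_self (Λ : Matrix m n 𝕜) :
    HasFDerivAt (fun L : Matrix m n 𝕜 => Lᵀ * L)
      ((mulLinearMap 𝕜).flip Λ ∘ₗ (transposeLinearEquiv m n 𝕜 𝕜).toLinearMap
        + mulLinearMap 𝕜 Λᵀ).toContinuousLinearMap Λ := by
  let B : Matrix n m 𝕜 →L[𝕜] Matrix m n 𝕜 →L[𝕜] Matrix n n 𝕜 :=
    LinearMap.toContinuousLinearMap
      ((LinearMap.toContinuousLinearMap : _ ≃ₗ[𝕜] (Matrix m n 𝕜 →L[𝕜] Matrix n n 𝕜)).toLinearMap ∘ₗ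
        mulLinearMap 𝕜)
  refine (B.hasFDerivAt_of_bilinear
    (transposeLinearEquiv m n 𝕜 𝕜).toContinuousLinearEquiv.hasFDerivAt
    (hasFDerivAt_id Λ)).congr_fderiv (ContinuousLinearMap.ext fun H => ?_)
  exact add_comm (Λᵀ * H) (Hᵀ * Λ)

end Calculus

end Matrix

section Gradients

variable {p d : ℕ} {Λ : Matrix (Fin p) (Fin d) ℝ}

theorem hasFDerivAt_det_transpose_mul_self (hΛ : IsUnit (Λᵀ * Λ)) :
    HasFDerivAt (fun L : Matrix (Fin p) (Fin d) ℝ => (Lᵀ * L).det)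
      (gradCLM ((2 * (Λᵀ * Λ).det) • (Λ * (Λᵀ * Λ)⁻¹))) Λ := by
  refine ((hasFDerivAt_det _).comp Λ (hasFDerivAt_transpose_mul_self Λ)).congr_fderiv
    (ContinuousLinearMap.ext fun H => ?_)
  -- `gradCLM` carries the non-normed matrix instances, so `rw` and `simp` cannot see through the
  -- composed derivative; it is compared pointwise, by `change`, here and below.
  change trace ((Λᵀ * Λ).adjugate * (Hᵀ * Λ + Λᵀ * H)) =
    trace (((2 * (Λᵀ * Λ).det) • (Λ * (Λᵀ * Λ)⁻¹))ᵀ * H)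
  have hsymm : (Λᵀ * Λ)⁻¹.IsSymm := IsSymm.inv (transpose_mul Λᵀ Λ)
  have hadj : (Λᵀ * Λ).adjugate = (Λᵀ * Λ).det • (Λᵀ * Λ)⁻¹ := by
    rw [inv_def, smul_smul, Ring.mul_inverse_cancel _ ((isUnit_iff_isUnit_det _).mp hΛ), one_smul]
  rw [hadj, Matrix.mul_add, trace_add, smul_mul, smul_mul, trace_smul, trace_smul,
    hsymm.trace_mul_transpose_mul, transpose_smul, transpose_mul, hsymm.eq, smul_mul, trace_smul,
    Matrix.mul_assoc]
  ring

theorem hasFDerivAt_det_transpose_mul_self_rpow (hΛ : IsUnit (Λᵀ * Λ)) (r : ℝ) :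
    HasFDerivAt (fun L : Matrix (Fin p) (Fin d) ℝ => (Lᵀ * L).det ^ r)
      (gradCLM ((2 * r * (Λᵀ * Λ).det ^ r) • (Λ * (Λᵀ * Λ)⁻¹))) Λ := by
  have hdet : (Λᵀ * Λ).det ≠ 0 := ((isUnit_iff_isUnit_det _).mp hΛ).ne_zero
  refine ((hasFDerivAt_det_transpose_mul_self hΛ).rpow_const (p := r) (Or.inl hdet)).congr_fderiv
    (ContinuousLinearMap.ext fun H => ?_)
  change r * (Λᵀ * Λ).det ^ (r - 1) * trace (((2 * (Λᵀ * Λ).det) • (Λ * (Λᵀ * Λ)⁻¹))ᵀ * H) =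
    trace (((2 * r * (Λᵀ * Λ).det ^ r) • (Λ * (Λᵀ * Λ)⁻¹))ᵀ * H)
  rw [transpose_smul, transpose_smul, smul_mul, smul_mul, trace_smul, trace_smul, smul_eq_mul,
    smul_eq_mul, Real.rpow_sub_one hdet]
  field_simp

theorem hasFDerivAt_dotProduct_inv_transpose_mul_self_mulVec (hΛ : IsUnit (Λᵀ * Λ))
    (k : Fin d → ℝ) :
    HasFDerivAt (fun L : Matrix (Fin p) (Fin d) ℝ => k ⬝ᵥ ((Lᵀ * L)⁻¹ *ᵥ k))
      (gradCLM ((-2 : ℝ) • (Λ * (Λᵀ * Λ)⁻¹ * vecMulVec k k * (Λᵀ * Λ)⁻¹))) Λ := by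
  refine ((dotProductMulVecₗ k k).toContinuousLinearMap.hasFDerivAt.comp Λ
    ((hasFDerivAt_inv hΛ).comp (f := fun L : Matrix (Fin p) (Fin d) ℝ => Lᵀ * L) Λ
      (hasFDerivAt_transpose_mul_self Λ))).congr_fderiv (ContinuousLinearMap.ext fun H => ?_)
  change k ⬝ᵥ (-((Λᵀ * Λ)⁻¹ * (Hᵀ * Λ + Λᵀ * H) * (Λᵀ * Λ)⁻¹) *ᵥ k) =
    trace (((-2 : ℝ) • (Λ * (Λᵀ * Λ)⁻¹ * vecMulVec k k * (Λᵀ * Λ)⁻¹))ᵀ * H)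
  have hsymm : (Λᵀ * Λ)⁻¹.IsSymm := IsSymm.inv (transpose_mul Λᵀ Λ)
  rw [neg_mulVec, dotProduct_neg, Matrix.mul_add, Matrix.add_mul, add_mulVec, dotProduct_add,
    hsymm.dotProduct_mul_transpose_mul_mulVec, transpose_smul, smul_mul, trace_smul]
  have htr : trace ((Λ * (Λᵀ * Λ)⁻¹ * vecMulVec k k * (Λᵀ * Λ)⁻¹)ᵀ * H) =
      k ⬝ᵥ (((Λᵀ * Λ)⁻¹ * (Λᵀ * H) * (Λᵀ * Λ)⁻¹) *ᵥ k) := by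
    rw [← trace_vecMulVec_mul]
    simp only [transpose_mul, hsymm.eq, transpose_vecMulVec, Matrix.mul_assoc]
    rw [trace_mul_comm (Λᵀ * Λ)⁻¹]
    simp only [Matrix.mul_assoc]
  rw [htr, smul_eq_mul]
  ring

end Gradients

theorem hasFDerivAt_const_mul_exp_neg_mul_mul {E : Type*} [NormedAddCommGroup E]
    [NormedSpace ℝ E] {u v : E → ℝ} {u' v' : StrongDual ℝ E} {x : E} (hu : HasFDerivAt u u' x)
    (hv : HasFDerivAt v v' x) (C a : ℝ) :
    HasFDerivAt (fun y => C * Real.exp (-(a * u y * v y)))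
      ((-a * (C * Real.exp (-(a * u x * v x)))) • (u x • v' + v x • u')) x := by
  refine (((hu.const_mul a).mul hv).neg.exp.const_mul C).congr_fderiv ?_
  ext y
  simp only [Pi.neg_apply, Pi.mul_apply, _root_.add_apply, _root_.neg_apply, _root_.smul_apply,
    smul_eq_mul]
  ring

theorem gMat_eq {p d : ℕ} (k : Fin d → ℝ) (Λ : Matrix (Fin p) (Fin d) ℝ) :
    gMat k Λ =
      (2 * (Λᵀ * Λ).det ^ ((1 : ℝ) / d) * (k ⬝ᵥ ((Λᵀ * Λ)⁻¹ *ᵥ k)) / d) • (Λ * (Λᵀ * Λ)⁻¹) -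
        (2 * (Λᵀ * Λ).det ^ ((1 : ℝ) / d)) • (Λ * (Λᵀ * Λ)⁻¹ * vecMulVec k k * (Λᵀ * Λ)⁻¹) := by
  simp only [gMat, Matrix.mul_sub, Matrix.mul_smul, Matrix.mul_one, smul_sub, smul_smul,
    Matrix.mul_assoc, mul_div_assoc]

theorem stmt13_general (p d : ℕ) (k : Fin d → ℝ) (ρ c : ℝ)
    (Λ : Matrix (Fin p) (Fin d) ℝ) (hΛ : Λ.rank = d) :
    HasFDerivAt (fun L : Matrix (Fin p) (Fin d) ℝ => phiGauss ρ c k L)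
      (gradCLM ((-(2 * π ^ 2 * c ^ (-(2 : ℝ) / d)) * phiGauss ρ c k Λ) •
        gMat k Λ)) Λ := by
  have hunit : IsUnit (Λᵀ * Λ) :=
    isUnit_transpose_mul_self_of_rank_eq_card (by rwa [Fintype.card_fin])
  refine (hasFDerivAt_const_mul_exp_neg_mul_mul
    (hasFDerivAt_det_transpose_mul_self_rpow hunit (1 / d))
    (hasFDerivAt_dotProduct_inv_transpose_mul_self_mulVec hunit k)
    (ρ * (2 * π) ^ ((d : ℝ) / 2) / c) (2 * π ^ 2 * c ^ (-(2 : ℝ) / d))).congr_fderiv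
    (ContinuousLinearMap.ext fun H => ?_)
  change (-(2 * π ^ 2 * c ^ (-(2 : ℝ) / d)) * phiGauss ρ c k Λ) *
      ((Λᵀ * Λ).det ^ ((1 : ℝ) / d) *
          trace (((-2 : ℝ) • (Λ * (Λᵀ * Λ)⁻¹ * vecMulVec k k * (Λᵀ * Λ)⁻¹))ᵀ * H) +
        k ⬝ᵥ ((Λᵀ * Λ)⁻¹ *ᵥ k) *
          trace (((2 * (1 / d) * (Λᵀ * Λ).det ^ ((1 : ℝ) / d)) • (Λ * (Λᵀ * Λ)⁻¹))ᵀ * H)) =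
    trace (((-(2 * π ^ 2 * c ^ (-(2 : ℝ) / d)) * phiGauss ρ c k Λ) • gMat k Λ)ᵀ * H)
  rw [gMat_eq]
  simp only [transpose_sub, transpose_smul, Matrix.sub_mul, smul_mul, trace_sub, trace_smul,
    smul_eq_mul]
  ring

theorem stmt13 (p d : ℕ) (hd : 1 ≤ d) (hdp : d ≤ p)
    (k : Fin d → ℝ) (ρ c : ℝ) (hρ : 0 < ρ) (hc : 0 < c)
    (Λ : Matrix (Fin p) (Fin d) ℝ) (hΛ : Λ.rank = d) :
    HasFDerivAt (fun L : Matrix (Fin p) (Fin d) ℝ => phiGauss ρ c k L)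
      (gradCLM ((-(2 * π ^ 2 * c ^ (-(2 : ℝ) / d)) * phiGauss ρ c k Λ) •
        gMat k Λ)) Λ :=
  stmt13_general p d k ρ c Λ hΛ
end

section
/- Fix N ∈ ℕ, constants ρ, c > 0, and points t₁,…,t_m ∈ ℝ^d. For k ∈ Z_N^d := {−N,…,N}^d define complex vectors u_k, v_k ∈ ℂ^m by (u_k)_j = exp(2πi⟨k,t_j⟩) and (v_k)_j = exp(−2πi⟨k,t_j⟩), and for a real p×d matrix Λ of full rank d define φ_Λ(k) = ρ (2π)^{d/2} c^{−1} exp(−2π² c^{−2/d} det(ΛᵀΛ)^{1/d} kᵀ(ΛᵀΛ)^{−1}k) and the m×m complex matrix C^app(Λ) = Σ_{k∈Z_N^d} [φ_Λ(k)/(1−φ_Λ(k))] u_k v_kᵀ. Suppose φ_Λ(k) < 1 for all k ∈ Z_N^d and C^app(Λ) is invertible. Then for every entry index (a,b) with 1 ≤ a ≤ p, 1 ≤ b ≤ d, the partial derivative of the map Λ ↦ det C^app(Λ) with respect to the (a,b) entry of Λ equals det(C^app(Λ)) · (−2π² c^{−2/d}) · Σ_{k∈Z_N^d} [φ_Λ(k)/(1−φ_Λ(k))²]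 · g^{(k)}(Λ)_{ab} · (v_kᵀ (C^app(Λ))^{−1} u_k), where g^{(k)}(Λ) = 2 det(ΛᵀΛ)^{1/d} Λ (ΛᵀΛ)^{−1} [ (1/d)(kᵀ(ΛᵀΛ)^{−1}k) I_d − k kᵀ (ΛᵀΛ)^{−1} ]. -/
open Matrix Real

/-- The lattice `Z_N^d = {-N, …, N}^d`. -/
noncomputable def latticeZN (d N : ℕ) : Finset (Fin d → ℤ) :=
  Fintype.piFinset fun _ => Finset.Icc (-(N : ℤ)) (N : ℤ)

/-- `(u_k)_j = exp(2πi⟨k, t_j⟩)`. -/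
noncomputable def uVec {d m : ℕ} (t : Fin m → (Fin d → ℝ)) (k : Fin d → ℤ) :
    Fin m → ℂ :=
  fun j => Complex.exp (2 * π * Complex.I * (((fun i => (k i : ℝ)) ⬝ᵥ t j : ℝ) : ℂ))

/-- `(v_k)_j = exp(−2πi⟨k, t_j⟩)`. -/
noncomputable def vVec {d m : ℕ} (t : Fin m → (Fin d → ℝ)) (k : Fin d → ℤ) :
    Fin m → ℂ :=
  fun j => Complex.exp (-(2 * π * Complex.I * (((fun i => (k i : ℝ)) ⬝ᵥ t j : ℝ) : ℂ)))

/-- The truncated spectral approximation `C^app(Λ) = Σ_k φ/(1−φ) u_k v_kᵀ`. -/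
noncomputable def CappG {p d m : ℕ} (ρ c : ℝ) (N : ℕ) (t : Fin m → (Fin d → ℝ))
    (L : Matrix (Fin p) (Fin d) ℝ) : Matrix (Fin m) (Fin m) ℂ :=
  ∑ k ∈ latticeZN d N,
    ((phiGauss ρ c (fun i => (k i : ℝ)) L /
        (1 - phiGauss ρ c (fun i => (k i : ℝ)) L) : ℝ) : ℂ) •
      Matrix.vecMulVec (uVec t k) (vVec t k)

/-!
Jacobi's formula `d det C = det C · tr (C⁻¹ dC)` reduces the claim to differentiating the
scalar weights `φ/(1 - φ)` of the rank-one terms `u_k v_kᵀ` of `C^app`; their derivative is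
`φ'/(1 - φ)²`, and `φ' = -2π² c^{-2/d} φ · ∂(det(G)^{1/d} kᵀG⁻¹k)` with `G = ΛᵀΛ`. Moving `Λ`
along `E = E_ab`, the Gram matrix moves with derivative `EᵀΛ + ΛᵀE`; Jacobi's formula again and
`d(G⁻¹) = -G⁻¹ dG G⁻¹` show that the derivative of `det(G)^{1/d} kᵀG⁻¹k` is the `(a, b)` entry
of `g^{(k)}(Λ)`. Full rank of `Λ` makes `det G > 0`, so that `det(G)^{1/d}` is differentiable.
-/

open Finset

namespace Matrix

section Algebra

variable {n R : Type*} [Fintype n] [DecidableEq n] [CommRing R]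

theorem trace_adjugate_mul (A B : Matrix n n R) :
    (A.adjugate * B).trace = ∑ i, (A.updateCol i fun r => B r i).det := by
  simp only [← cramer_apply, cramer_eq_adjugate_mulVec]
  simp [trace, mul_apply, mulVec, dotProduct]

theorem det_updateCol_eq_sum_perm (A : Matrix n n R) (i : n) (v : n → R) :
    (A.updateCol i v).det =
      ∑ σ : Equiv.Perm n, ((σ.sign : ℤ) : R) * (v (σ i) * ∏ j ∈ univ.erase i, A (σ j) j) := by
  rw [det_apply]
  refine sum_congr rfl fun σ _ => ?_
  rw [Units.smul_def, zsmul_eq_mul, ← mul_prod_erase _ _ (mem_univ i)]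
  congr 2
  · simp
  · exact prod_congr rfl fun j hj => by simp [ne_of_mem_erase hj]

theorem adjugate_eq_det_smul_inv {A : Matrix n n R} (h : IsUnit A.det) :
    A.adjugate = A.det • A⁻¹ := by
  rw [nonsing_inv_apply A h, smul_smul, h.mul_val_inv, one_smul]

end Algebra

section Calculus

variable {m n 𝕜 R : Type*} [Fintype m] [Fintype n] [NontriviallyNormedField 𝕜]
  [NormedCommRing R] [NormedAlgebra 𝕜 R] {x : 𝕜}

theorem hasDerivAt_det [DecidableEq n] {A : 𝕜 → Matrix n n R} {A' : Matrix n n R}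
    (h : ∀ i j, HasDerivAt (fun s => A s i j) (A' i j) x) :
    HasDerivAt (fun s => (A s).det) ((A x).adjugate * A').trace x := by
  have hperm : HasDerivAt (fun s => (A s).det)
      (∑ σ : Equiv.Perm n, ((σ.sign : ℤ) : R) *
        ∑ i, (∏ j ∈ univ.erase i, A x (σ j) j) • A' (σ i) i) x := by
    simp only [det_apply, Units.smul_def, zsmul_eq_mul]
    exact HasDerivAt.fun_sum fun σ _ =>
      (HasDerivAt.fun_finsetProd fun i _ => h (σ i) i).const_mul _
  convert hperm using 1
  simp only [trace_adjugate_mul, det_updateCol_eq_sum_perm, smul_eq_mul, mul_sum]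
  rw [sum_comm]
  exact sum_congr rfl fun σ _ => sum_congr rfl fun i _ => by ring

theorem hasDerivAt_det_of_isUnit [DecidableEq n] {A : 𝕜 → Matrix n n R} {A' : Matrix n n R}
    (h : ∀ i j, HasDerivAt (fun s => A s i j) (A' i j) x) (hA : IsUnit (A x).det) :
    HasDerivAt (fun s => (A s).det) ((A x).det * ((A x)⁻¹ * A').trace) x := by
  simpa only [adjugate_eq_det_smul_inv hA, Matrix.smul_mul, trace_smul, smul_eq_mul]
    using hasDerivAt_det h

theorem hasDerivAt_dotProduct_mulVec {F : 𝕜 → Matrix m n R} {F' : Matrix m n R}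
    (h : ∀ i j, HasDerivAt (fun s => F s i j) (F' i j) x) (u : m → R) (v : n → R) :
    HasDerivAt (fun s => u ⬝ᵥ (F s *ᵥ v)) (u ⬝ᵥ (F' *ᵥ v)) x :=
  HasDerivAt.fun_sum fun i _ =>
    (HasDerivAt.fun_sum fun j _ => (h i j).mul_const (v j)).const_mul (u i)

end Calculus

theorem isUnit_of_rank_eq_card {n K : Type*} [Fintype n] [DecidableEq n] [Field K]
    {A : Matrix n n K} (h : A.rank = Fintype.card n) : IsUnit A := by
  rw [← mulVec_surjective_iff_isUnit, ← coe_mulVecLin, ← LinearMap.range_eq_top]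
  apply Submodule.eq_top_of_finrank_eq
  rw [← rank, h, Module.finrank_fintype_fun_eq_card]

theorem det_transpose_mul_self_pos {m n : Type*} [Fintype m] [Fintype n] [DecidableEq n]
    {A : Matrix m n ℝ} (h : A.rank = Fintype.card n) : 0 < (Aᵀ * A).det := by
  have hunit : IsUnit (Aᵀ * A) := isUnit_of_rank_eq_card (by rw [rank_transpose_mul_self, h])
  have hpsd : (Aᵀ * A).PosSemidef := by
    simpa [conjTranspose_eq_transpose_of_trivial] using posSemidef_conjTranspose_mul_self A
  exact hpsd.det_nonneg.lt_of_ne ((isUnit_iff_isUnit_det _).1 hunit).ne_zero.symm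

end Matrix

section GramPath

-- An auxiliary norm on square matrices, needed only to differentiate `Ring.inverse`.
attribute [local instance] Matrix.linftyOpNormedRing Matrix.linftyOpNormedAlgebra

theorem hasDerivAt_matrix_apply {n : Type*} [Fintype n] [DecidableEq n] {F : ℝ → Matrix n n ℝ}
    {F' : Matrix n n ℝ} {x : ℝ} (h : HasDerivAt F F' x) (i j : n) :
    HasDerivAt (fun s => F s i j) (F' i j) x :=
  (entryLinearMap ℝ ℝ i j).toContinuousLinearMap.hasFDerivAt.comp_hasDerivAt x h

variable {m n : Type*} [Fintype m] (Λ E : Matrix m n ℝ)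

theorem transpose_add_smul_mul_add_smul (s : ℝ) :
    (Λ + s • E)ᵀ * (Λ + s • E) = Λᵀ * Λ + s • (Eᵀ * Λ + Λᵀ * E) + (s * s) • (Eᵀ * E) := by
  simp only [transpose_add, transpose_smul, Matrix.add_mul, Matrix.mul_add, Matrix.smul_mul,
    Matrix.mul_smul, smul_add, smul_smul]
  abel

variable [Fintype n] [DecidableEq n]

theorem hasDerivAt_gram_add_smul :
    HasDerivAt (fun s : ℝ => (Λ + s • E)ᵀ * (Λ + s • E)) (Eᵀ * Λ + Λᵀ * E) 0 := by
  simp only [transpose_add_smul_mul_add_smul]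
  exact ((((hasDerivAt_id (0 : ℝ)).smul_const (Eᵀ * Λ + Λᵀ * E)).const_add (Λᵀ * Λ)).fun_add
    (((hasDerivAt_id (0 : ℝ)).fun_mul (hasDerivAt_id 0)).smul_const (Eᵀ * E))).congr_deriv
    (by simp)

theorem hasDerivAt_inv_gram_add_smul (h : IsUnit (Λᵀ * Λ)) :
    HasDerivAt (fun s : ℝ => ((Λ + s • E)ᵀ * (Λ + s • E))⁻¹)
      (-((Λᵀ * Λ)⁻¹ * (Eᵀ * Λ + Λᵀ * E) * (Λᵀ * Λ)⁻¹)) 0 := by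
  simp only [nonsing_inv_eq_ringInverse]
  exact ((hasFDerivAt_ringInverse (𝕜 := ℝ) h.unit).comp_hasDerivAt_of_eq 0
    (hasDerivAt_gram_add_smul Λ E) (by simp)).congr_deriv (by simp [nonsing_inv_eq_ringInverse])

theorem hasDerivAt_det_gram_add_smul (h : IsUnit (Λᵀ * Λ).det) :
    HasDerivAt (fun s : ℝ => ((Λ + s • E)ᵀ * (Λ + s • E)).det)
      ((Λᵀ * Λ).det * ((Λᵀ * Λ)⁻¹ * (Eᵀ * Λ + Λᵀ * E)).trace) 0 := by
  simpa using hasDerivAt_det_of_isUnit (hasDerivAt_matrix_apply (hasDerivAt_gram_add_smul Λ E))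
    (by simpa using h)

theorem hasDerivAt_dotProduct_inv_gram_add_smul_mulVec (h : IsUnit (Λᵀ * Λ)) (k : n → ℝ) :
    HasDerivAt (fun s : ℝ => k ⬝ᵥ (((Λ + s • E)ᵀ * (Λ + s • E))⁻¹ *ᵥ k))
      (-(k ⬝ᵥ (((Λᵀ * Λ)⁻¹ * (Eᵀ * Λ + Λᵀ * E) * (Λᵀ * Λ)⁻¹) *ᵥ k))) 0 := by
  simpa only [neg_mulVec, dotProduct_neg] using
    hasDerivAt_dotProduct_mulVec (hasDerivAt_matrix_apply (hasDerivAt_inv_gram_add_smul Λ E h)) k k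

end GramPath

section SingleEntry

variable {m n : Type*} [Fintype m] [Fintype n] [DecidableEq m] [DecidableEq n]
  (Λ : Matrix m n ℝ) {N : Matrix n n ℝ} (a : m) (b : n)

theorem trace_mul_gramDeriv_single (hN : Nᵀ = N) :
    (N * ((single a b (1 : ℝ))ᵀ * Λ + Λᵀ * single a b (1 : ℝ))).trace = 2 * (Λ * N) a b := by
  have hleft : (N * ((single a b (1 : ℝ))ᵀ * Λ)).trace = (Λ * N) a b := by
    rw [trace_mul_comm, transpose_single, Matrix.mul_assoc, trace_single_mul, one_smul]
  have hright : (N * (Λᵀ * single a b (1 : ℝ))).trace = (Λ * N) a b := by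
    rw [← Matrix.mul_assoc, trace_mul_single, ← hN, ← transpose_mul, transpose_apply, hN]
    simp
  rw [Matrix.mul_add, trace_add, hleft, hright, two_mul]

theorem dotProduct_mul_gramDeriv_single_mul (hN : Nᵀ = N) (k : n → ℝ) :
    k ⬝ᵥ ((N * ((single a b (1 : ℝ))ᵀ * Λ + Λᵀ * single a b (1 : ℝ)) * N) *ᵥ k) =
      2 * (Λ *ᵥ (N *ᵥ k)) a * (N *ᵥ k) b := by
  set w := N *ᵥ k
  have hsandwich : ∀ X : Matrix n n ℝ, k ⬝ᵥ ((N * X * N) *ᵥ k) = w ⬝ᵥ (X *ᵥ w) := by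
    intro X
    rw [← mulVec_mulVec, ← mulVec_mulVec, dotProduct_mulVec, ← hN, vecMul_transpose, hN]
  have hsingle : single a b (1 : ℝ) *ᵥ w = Pi.single a (w b) := by
    rw [single_mulVec, one_mul]; rfl
  rw [hsandwich, Matrix.add_mulVec, dotProduct_add, ← mulVec_mulVec, ← mulVec_mulVec,
    dotProduct_mulVec, vecMul_transpose, dotProduct_mulVec w Λᵀ, vecMul_transpose,
    hsingle, single_dotProduct, dotProduct_single]
  ring

end SingleEntry

noncomputable def gramExponent {p d : ℕ} (k : Fin d → ℝ) (Λ : Matrix (Fin p) (Fin d) ℝ) : ℝ :=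
  (Λᵀ * Λ).det ^ ((1 : ℝ) / d) * (k ⬝ᵥ ((Λᵀ * Λ)⁻¹ *ᵥ k))

section GramExponent

variable {p d : ℕ} (k : Fin d → ℝ) (Λ : Matrix (Fin p) (Fin d) ℝ)

theorem transpose_inv_transpose_mul_self : ((Λᵀ * Λ)⁻¹)ᵀ = (Λᵀ * Λ)⁻¹ := by
  rw [transpose_nonsing_inv, transpose_mul, transpose_transpose]

theorem gMat_apply (a : Fin p) (b : Fin d) :
    gMat k Λ a b = 2 * (Λᵀ * Λ).det ^ ((1 : ℝ) / d) *
      ((k ⬝ᵥ ((Λᵀ * Λ)⁻¹ *ᵥ k)) / d * (Λ * (Λᵀ * Λ)⁻¹) a b -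
        (Λ *ᵥ ((Λᵀ * Λ)⁻¹ *ᵥ k)) a * ((Λᵀ * Λ)⁻¹ *ᵥ k) b) := by
  have hsymm : k ᵥ* (Λᵀ * Λ)⁻¹ = (Λᵀ * Λ)⁻¹ *ᵥ k := by
    rw [← vecMul_transpose, transpose_inv_transpose_mul_self]
  rw [gMat, Matrix.smul_apply, smul_eq_mul, Matrix.mul_sub, Matrix.mul_smul, Matrix.mul_one,
    vecMulVec_mul, mul_vecMulVec, Matrix.sub_apply, Matrix.smul_apply, smul_eq_mul,
    vecMulVec_apply, hsymm, ← mulVec_mulVec]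

theorem hasDerivAt_gramExponent_single (hΛ : 0 < (Λᵀ * Λ).det) (a : Fin p) (b : Fin d) :
    HasDerivAt (fun s : ℝ => gramExponent k (Λ + s • single a b 1)) (gMat k Λ a b) 0 := by
  have hd : (d : ℝ) ≠ 0 := Nat.cast_ne_zero.2 (Fin.pos b).ne'
  have hunit : IsUnit (Λᵀ * Λ) := (isUnit_iff_isUnit_det _).2 hΛ.ne'.isUnit
  have hsymm := transpose_inv_transpose_mul_self Λ
  have hdet := (hasDerivAt_det_gram_add_smul Λ (single a b 1) hΛ.ne'.isUnit).rpow_const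
    (p := 1 / d) (Or.inl (by simpa using hΛ.ne'))
  have hquad := hasDerivAt_dotProduct_inv_gram_add_smul_mulVec Λ (single a b 1) hunit k
  refine (hdet.mul hquad).congr_deriv ?_
  simp only [zero_smul, add_zero]
  rw [gMat_apply, trace_mul_gramDeriv_single Λ a b hsymm,
    dotProduct_mul_gramDeriv_single_mul Λ a b hsymm, Real.rpow_sub hΛ, Real.rpow_one]
  field_simp
  ring

end GramExponent

theorem phiGauss_eq_mul_exp_gramExponent {p d : ℕ} (ρ c : ℝ) (k : Fin d → ℝ)
    (Λ : Matrix (Fin p) (Fin d) ℝ) :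
    phiGauss ρ c k Λ = ρ * (2 * π) ^ ((d : ℝ) / 2) / c *
      Real.exp (-(2 * π ^ 2 * c ^ (-(2 : ℝ) / d) * gramExponent k Λ)) := by
  simp only [phiGauss, gramExponent, ← mul_assoc]

theorem hasDerivAt_phiGauss_single {p d : ℕ} (ρ c : ℝ) (k : Fin d → ℝ)
    {Λ : Matrix (Fin p) (Fin d) ℝ} (hΛ : 0 < (Λᵀ * Λ).det) (a : Fin p) (b : Fin d) :
    HasDerivAt (fun s : ℝ => phiGauss ρ c k (Λ + s • single a b 1))
      (-(2 * π ^ 2 * c ^ (-(2 : ℝ) / d)) * phiGauss ρ c k Λ * gMat k Λ a b) 0 := by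
  simp only [phiGauss_eq_mul_exp_gramExponent]
  refine ((((hasDerivAt_gramExponent_single k Λ hΛ a b).const_mul _).neg.exp).const_mul
    _).congr_deriv ?_
  simp only [Pi.neg_apply, zero_smul, add_zero]
  ring

theorem HasDerivAt.div_one_sub {f : ℝ → ℝ} {f' x : ℝ} (hf : HasDerivAt f f' x) (hx : f x ≠ 1) :
    HasDerivAt (fun y => f y / (1 - f y)) (f' / (1 - f x) ^ 2) x := by
  have hne : 1 - f x ≠ 0 := sub_ne_zero.2 hx.symm
  refine (hf.div ((hasDerivAt_const x 1).fun_sub hf) hne).congr_deriv ?_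
  field_simp
  ring

theorem hasDerivAt_sum_ofReal_smul_apply {ι m n : Type*} (s : Finset ι) {w : ι → ℝ → ℝ}
    {w' : ι → ℝ} {x : ℝ} (hw : ∀ k ∈ s, HasDerivAt (w k) (w' k) x) (M : ι → Matrix m n ℂ)
    (i : m) (j : n) :
    HasDerivAt (fun y => (∑ k ∈ s, (w k y : ℂ) • M k) i j) ((∑ k ∈ s, (w' k : ℂ) • M k) i j) x := by
  simp only [Matrix.sum_apply, Matrix.smul_apply, smul_eq_mul]
  exact HasDerivAt.fun_sum fun k hk => (hw k hk).ofReal_comp.mul_const _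

theorem trace_mul_smul_vecMulVec {n R : Type*} [Fintype n] [CommRing R] (A : Matrix n n R)
    (w : R) (u v : n → R) : (A * (w • vecMulVec u v)).trace = w * (v ⬝ᵥ (A *ᵥ u)) := by
  rw [Matrix.mul_smul, trace_smul, mul_vecMulVec, trace_vecMulVec, dotProduct_comm, smul_eq_mul]

theorem stmt15_general (p d m : ℕ)
    (N : ℕ) (ρ c : ℝ)
    (t : Fin m → (Fin d → ℝ))
    (Λ : Matrix (Fin p) (Fin d) ℝ) (hΛ : Λ.rank = d)
    (hφ : ∀ k ∈ latticeZN d N, phiGauss ρ c (fun i => (k i : ℝ)) Λ < 1)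
    (hC : IsUnit (CappG ρ c N t Λ).det) :
    ∀ (a : Fin p) (b : Fin d),
      HasDerivAt
        (fun s : ℝ => (CappG ρ c N t (Λ + s • Matrix.single a b 1)).det)
        ((CappG ρ c N t Λ).det * ((-(2 * π ^ 2 * c ^ (-(2 : ℝ) / d)) : ℝ) : ℂ) *
          ∑ k ∈ latticeZN d N,
            ((phiGauss ρ c (fun i => (k i : ℝ)) Λ /
                (1 - phiGauss ρ c (fun i => (k i : ℝ)) Λ) ^ 2 *
                gMat (fun i => (k i : ℝ)) Λ a b : ℝ) : ℂ) *
              (vVec t k ⬝ᵥ ((CappG ρ c N t Λ)⁻¹ *ᵥ uVec t k)))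
        0 := by
  intro a b
  have hgram : 0 < (Λᵀ * Λ).det := det_transpose_mul_self_pos (by rw [hΛ, Fintype.card_fin])
  have hweights : ∀ k ∈ latticeZN d N, HasDerivAt
      (fun s : ℝ => phiGauss ρ c (fun i => (k i : ℝ)) (Λ + s • single a b 1) /
        (1 - phiGauss ρ c (fun i => (k i : ℝ)) (Λ + s • single a b 1)))
      (-(2 * π ^ 2 * c ^ (-(2 : ℝ) / d)) * phiGauss ρ c (fun i => (k i : ℝ)) Λ *
        gMat (fun i => (k i : ℝ)) Λ a b / (1 - phiGauss ρ c (fun i => (k i : ℝ)) Λ) ^ 2) 0 :=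
    fun k hk => (hasDerivAt_phiGauss_single ρ c _ hgram a b).div_one_sub
      (by simpa using (hφ k hk).ne) |>.congr_deriv (by simp)
  refine (hasDerivAt_det_of_isUnit (A := fun s : ℝ => CappG ρ c N t (Λ + s • single a b 1))
    (hasDerivAt_sum_ofReal_smul_apply _ hweights _) (by simpa using hC)).congr_deriv ?_
  simp only [zero_smul, add_zero, trace_sum, trace_mul_smul_vecMulVec, mul_sum]
  refine sum_congr rfl fun k _ => ?_
  push_cast
  ring

theorem stmt15 (p d m : ℕ) (hd : 1 ≤ d) (hdp : d ≤ p)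
    (N : ℕ) (ρ c : ℝ) (hρ : 0 < ρ) (hc : 0 < c)
    (t : Fin m → (Fin d → ℝ))
    (Λ : Matrix (Fin p) (Fin d) ℝ) (hΛ : Λ.rank = d)
    (hφ : ∀ k ∈ latticeZN d N, phiGauss ρ c (fun i => (k i : ℝ)) Λ < 1)
    (hC : IsUnit (CappG ρ c N t Λ).det) :
    ∀ (a : Fin p) (b : Fin d),
      HasDerivAt
        (fun s : ℝ => (CappG ρ c N t (Λ + s • Matrix.single a b 1)).det)
        ((CappG ρ c N t Λ).det * ((-(2 * π ^ 2 * c ^ (-(2 : ℝ) / d)) : ℝ) : ℂ) *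
          ∑ k ∈ latticeZN d N,
            ((phiGauss ρ c (fun i => (k i : ℝ)) Λ /
                (1 - phiGauss ρ c (fun i => (k i : ℝ)) Λ) ^ 2 *
                gMat (fun i => (k i : ℝ)) Λ a b : ℝ) : ℂ) *
              (vVec t k ⬝ᵥ ((CappG ρ c N t Λ)⁻¹ *ᵥ uVec t k)))
        0 :=
  stmt15_general p d m N ρ c t Λ hΛ hφ hC
end
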